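/- Let L be a locally compact Hausdorff space with at least two points and Y a strictly monotone Banach lattice. If the pair (C₀(L), Y) has the Bishop–Phelps–Bollobás property for positive operators, then Y is uniformly monotone. -/

import Mathlib

/-!
Normalise so that `‖x + y‖ = 1`, and realise `x` and `y` as the images of two disjointly
supported bumps `e₁`, `e₂` under the positive norm-one operator `S f = f t₁ • x + f t₂ • y`.
As `‖S e₁‖` is close to `1`, the Bishop–Phelps–Bollobás property yields a positive norm-one `T`
close to `S` attaining its norm at some `u` close to `e₁`. Strict monotonicity forces
`T (|u| ⊔ e₂) = T |u|`, hence `T e₂ = T (e₂ ⊓ |u|)`, which is small because `|u|` is small on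
the support of `e₂`. So `‖y‖ ≈ ‖S e₂‖ ≈ ‖T e₂‖` is small.
-/

open Filter Topology Set
open scoped ZeroAtInfty

lemma nonneg_of_two_pow_nsmul_nonneg {α : Type*} [AddCommGroup α] [Lattice α]
    [IsOrderedAddMonoid α] {a : α} (k : ℕ) (h : 0 ≤ 2 ^ k • a) : 0 ≤ a := by
  induction k generalizing a with
  | zero => simpa using h
  | succ k ih => exact nsmul_two_semiclosed (ih (by rwa [← mul_nsmul, ← pow_succ']))

section SolidNorm

variable {Y : Type*} [NormedAddCommGroup Y] [Lattice Y] [HasSolidNorm Y] [IsOrderedAddMonoid Y]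
  [NormedSpace ℝ Y]

lemma smul_nonneg_of_hasSolidNorm {r : ℝ} (hr : 0 ≤ r) {x : Y} (hx : 0 ≤ x) : 0 ≤ r • x := by
  have hdyadic (n : ℕ) : 0 ≤ ((⌊r * 2 ^ n⌋₊ : ℝ) / 2 ^ n) • x := by
    refine nonneg_of_two_pow_nsmul_nonneg n ?_
    rw [← Nat.cast_smul_eq_nsmul ℝ, smul_smul, Nat.cast_pow, Nat.cast_ofNat,
      mul_div_cancel₀ _ (by positivity), Nat.cast_smul_eq_nsmul]
    exact nsmul_nonneg hx _
  have hlim : Tendsto (fun n : ℕ ↦ (⌊r * 2 ^ n⌋₊ : ℝ) / 2 ^ n) atTop (𝓝 r) :=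
    (tendsto_nat_floor_mul_div_atTop hr).comp (tendsto_pow_atTop_atTop_of_one_lt one_lt_two)
  exact isClosed_nonneg.mem_of_tendsto (hlim.smul_const x) (Eventually.of_forall hdyadic)

lemma isOrderedModule_of_hasSolidNorm : IsOrderedModule ℝ Y where
  smul_le_smul_of_nonneg_left := (PosSMulMono.of_smul_nonneg
    fun _ ha _ hb ↦ smul_nonneg_of_hasSolidNorm ha hb).smul_le_smul_of_nonneg_left
  smul_le_smul_of_nonneg_right _ hb _ _ ha := by
    simpa [sub_smul] using smul_nonneg_of_hasSolidNorm (sub_nonneg.2 ha) hb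

end SolidNorm

namespace ZeroAtInftyContinuousMap

section Lattice

variable {α β : Type*} [TopologicalSpace α] [TopologicalSpace β] [Zero β] [Lattice β]
  [TopologicalLattice β]

instance instMax : Max C₀(α, β) where
  max f g := ⟨(f : C(α, β)) ⊔ g, by
    simpa using (zero_at_infty f).sup_nhds' (zero_at_infty g)⟩

instance instMin : Min C₀(α, β) where
  min f g := ⟨(f : C(α, β)) ⊓ g, by
    simpa using (zero_at_infty f).inf_nhds' (zero_at_infty g)⟩

instance instLE : LE C₀(α, β) := ⟨fun f g ↦ ⇑f ≤ ⇑g⟩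

instance instLT : LT C₀(α, β) := ⟨fun f g ↦ ⇑f < ⇑g⟩

@[simp, norm_cast]
lemma coe_sup (f g : C₀(α, β)) : ⇑(f ⊔ g) = ⇑f ⊔ ⇑g := rfl

@[simp, norm_cast]
lemma coe_inf (f g : C₀(α, β)) : ⇑(f ⊓ g) = ⇑f ⊓ ⇑g := rfl

instance instLattice : Lattice C₀(α, β) :=
  DFunLike.coe_injective.lattice _ Iff.rfl Iff.rfl coe_sup coe_inf

end Lattice

instance instIsOrderedAddMonoid {α β : Type*} [TopologicalSpace α] [TopologicalSpace β]
    [AddCommGroup β] [Lattice β] [IsOrderedAddMonoid β] [IsTopologicalAddGroup β]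
    [TopologicalLattice β] : IsOrderedAddMonoid C₀(α, β) where
  add_le_add_left _ _ h c t := by simpa using add_le_add_left (h t) (c t)

section Norm

variable {α β : Type*} [TopologicalSpace α] [SeminormedAddCommGroup β]

lemma norm_apply_le (f : C₀(α, β)) (t : α) : ‖f t‖ ≤ ‖f‖ :=
  f.toBCF.norm_coe_le_norm t

lemma norm_le {f : C₀(α, β)} {C : ℝ} (hC : 0 ≤ C) : ‖f‖ ≤ C ↔ ∀ t, ‖f t‖ ≤ C :=
  f.toBCF.norm_le hC

variable (𝕜 : Type*) [NormedField 𝕜] [NormedSpace 𝕜 β]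

noncomputable def evalCLM (t : α) : C₀(α, β) →L[𝕜] β :=
  LinearMap.mkContinuous
    { toFun f := f t
      map_add' _ _ := rfl
      map_smul' _ _ := rfl } 1
    fun f ↦ by simpa using norm_apply_le f t

@[simp]
lemma evalCLM_apply (t : α) (f : C₀(α, β)) : evalCLM 𝕜 t f = f t := rfl

end Norm

@[simp]
lemma abs_apply {α β : Type*} [TopologicalSpace α] [TopologicalSpace β] [AddCommGroup β]
    [Lattice β] [IsTopologicalAddGroup β] [TopologicalLattice β] (f : C₀(α, β)) (t : α) :
    |f| t = |f t| := rfl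

lemma exists_eqOn_one_eqOn_zero {L : Type*} [TopologicalSpace L] [T2Space L]
    [LocallyCompactSpace L] {K F : Set L} (hK : IsCompact K) (hF : IsClosed F)
    (hKF : Disjoint K F) : ∃ f : C₀(L, ℝ), EqOn f 1 K ∧ EqOn f 0 F ∧ 0 ≤ f ∧ ‖f‖ ≤ 1 := by
  obtain ⟨f, hfK, hfF, hfc, hf01⟩ := exists_continuous_one_zero_of_isCompact hK hF hKF
  refine ⟨⟨f, hfc.is_zero_at_infty⟩, hfK, hfF, fun t ↦ (hf01 t).1,
    (norm_le zero_le_one).2 fun t ↦ ?_⟩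
  change ‖f t‖ ≤ 1
  rw [Real.norm_eq_abs, abs_of_nonneg (hf01 t).1]
  exact (hf01 t).2

end ZeroAtInftyContinuousMap

open ZeroAtInftyContinuousMap

lemma abs_smul_le_smul {R M : Type*} [Ring R] [LinearOrder R] [IsOrderedRing R] [AddCommGroup M]
    [Lattice M] [IsOrderedAddMonoid M] [Module R M] [SMulPosMono R M] {a b : R} (hab : |a| ≤ b)
    {x : M} (hx : 0 ≤ x) : |a • x| ≤ b • x := by
  refine abs_le'.2 ⟨smul_le_smul_of_nonneg_right (le_of_abs_le hab) hx, ?_⟩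
  simpa [neg_le] using smul_le_smul_of_nonneg_right (neg_le_of_abs_le hab) hx

lemma exists_disjoint_bumps {L : Type*} [TopologicalSpace L] [T2Space L] [LocallyCompactSpace L]
    {t₁ t₂ : L} (h : t₁ ≠ t₂) :
    ∃ e₁ e₂ : C₀(L, ℝ), 0 ≤ e₂ ∧ ‖e₁‖ = 1 ∧ ‖e₂‖ ≤ 1 ∧ e₁ t₁ = 1 ∧ e₁ t₂ = 0 ∧
      e₂ t₁ = 0 ∧ e₂ t₂ = 1 ∧ ∀ t, e₂ t ≠ 0 → e₁ t = 0 := by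
  obtain ⟨U₁, U₂, hU₁, hU₂, ht₁, ht₂, hU⟩ := t2_separation h
  obtain ⟨e₁, he₁K, he₁F, -, he₁⟩ := exists_eqOn_one_eqOn_zero isCompact_singleton
    hU₁.isClosed_compl (disjoint_singleton_left.2 (not_not.2 ht₁))
  obtain ⟨e₂, he₂K, he₂F, he₂0, he₂⟩ := exists_eqOn_one_eqOn_zero isCompact_singleton
    hU₂.isClosed_compl (disjoint_singleton_left.2 (not_not.2 ht₂))
  have he₁U₂ : ∀ t ∈ U₂, e₁ t = 0 := fun t ht ↦ he₁F (hU.notMem_of_mem_right ht)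
  have he₂U₂ : ∀ t, e₂ t ≠ 0 → t ∈ U₂ := fun t ht ↦ by_contra fun h ↦ ht (he₂F h)
  have he₁t₁ : e₁ t₁ = 1 := he₁K rfl
  refine ⟨e₁, e₂, he₂0, le_antisymm he₁ ?_, he₂, he₁t₁, he₁U₂ t₂ ht₂,
    he₂F (hU.notMem_of_mem_left ht₁), he₂K rfl, fun t ht ↦ he₁U₂ t (he₂U₂ t ht)⟩
  simpa [he₁t₁] using norm_apply_le e₁ t₁

section TwoPointOp

variable {L : Type*} [TopologicalSpace L] {Y : Type*} [NormedAddCommGroup Y] [NormedSpace ℝ Y]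

noncomputable def twoPointOp (t₁ t₂ : L) (x y : Y) : C₀(L, ℝ) →L[ℝ] Y :=
  (evalCLM ℝ t₁).smulRight x + (evalCLM ℝ t₂).smulRight y

@[simp]
lemma twoPointOp_apply (t₁ t₂ : L) (x y : Y) (f : C₀(L, ℝ)) :
    twoPointOp t₁ t₂ x y f = f t₁ • x + f t₂ • y := by
  simp [twoPointOp]

variable [Lattice Y] [IsOrderedAddMonoid Y] [IsOrderedModule ℝ Y]
  {t₁ t₂ : L} {x y : Y}

lemma twoPointOp_nonneg (hx : 0 ≤ x) (hy : 0 ≤ y) {f : C₀(L, ℝ)} (hf : 0 ≤ f) :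
    0 ≤ twoPointOp t₁ t₂ x y f := by
  rw [twoPointOp_apply]
  exact add_nonneg (smul_nonneg (hf t₁) hx) (smul_nonneg (hf t₂) hy)

lemma abs_twoPointOp_apply_le (hx : 0 ≤ x) (hy : 0 ≤ y) (f : C₀(L, ℝ)) :
    |twoPointOp t₁ t₂ x y f| ≤ ‖f‖ • (x + y) := by
  rw [twoPointOp_apply, smul_add]
  exact (abs_add_le _ _).trans (add_le_add (abs_smul_le_smul (norm_apply_le f t₁) hx)
    (abs_smul_le_smul (norm_apply_le f t₂) hy))

lemma norm_twoPointOp [HasSolidNorm Y] [T2Space L] [LocallyCompactSpace L] (hx : 0 ≤ x)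
    (hy : 0 ≤ y) : ‖twoPointOp t₁ t₂ x y‖ = ‖x + y‖ := by
  refine le_antisymm (ContinuousLinearMap.opNorm_le_bound _ (norm_nonneg _) fun f ↦ ?_) ?_
  · have hfxy : 0 ≤ ‖f‖ • (x + y) := smul_nonneg (norm_nonneg f) (add_nonneg hx hy)
    calc ‖twoPointOp t₁ t₂ x y f‖ ≤ ‖‖f‖ • (x + y)‖ := norm_le_norm_of_abs_le_abs
          ((abs_twoPointOp_apply_le hx hy f).trans_eq (abs_of_nonneg hfxy).symm)
      _ = ‖x + y‖ * ‖f‖ := by rw [norm_smul, norm_norm, mul_comm]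
  · obtain ⟨e, he, -, -, he1⟩ := exists_eqOn_one_eqOn_zero
      ((isCompact_singleton (x := t₂)).insert t₁) isClosed_empty (disjoint_empty _)
    calc ‖x + y‖ = ‖twoPointOp t₁ t₂ x y e‖ := by
          simp [he (mem_insert t₁ {t₂}), he (mem_insert_of_mem t₁ rfl)]
      _ ≤ ‖twoPointOp t₁ t₂ x y‖ := (twoPointOp t₁ t₂ x y).le_of_opNorm_le_of_le le_rfl he1
        |>.trans_eq (mul_one _)

end TwoPointOp

section NormingOperator

variable {L : Type*} [TopologicalSpace L] {Y : Type*} [NormedAddCommGroup Y] [Lattice Y]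
  [HasSolidNorm Y] [IsOrderedAddMonoid Y] [NormedSpace ℝ Y]
  {T : C₀(L, ℝ) →L[ℝ] Y} {u e : C₀(L, ℝ)}

lemma apply_eq_apply_inf_abs (hSM : ∀ x y : Y, 0 ≤ x → x ≤ y → x ≠ y → ‖x‖ < ‖y‖)
    (hT : ∀ f, 0 ≤ f → 0 ≤ T f) (hT1 : ‖T‖ ≤ 1) (hu : ‖u‖ ≤ 1) (hTu : ‖T u‖ = 1)
    (he1 : ‖e‖ ≤ 1) : T e = T (e ⊓ |u|) := by
  have hmono : Monotone T := fun f g h ↦ by simpa using hT (g - f) (sub_nonneg.2 h)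
  have hTle {f : C₀(L, ℝ)} (hf : ∀ t, |f t| ≤ 1) : ‖T f‖ ≤ 1 :=
    (T.le_of_opNorm_le hT1 f).trans (by simpa using (norm_le zero_le_one).2 hf)
  have hu' (t : L) : |u t| ≤ 1 := (norm_apply_le u t).trans hu
  have he' (t : L) : |e t| ≤ 1 := (norm_apply_le e t).trans he1
  have hTabs : ‖T |u|‖ = 1 := by
    refine le_antisymm (hTle fun t ↦ by simpa using hu' t) ?_
    have : |T u| ≤ T |u| :=
      abs_le'.2 ⟨hmono (le_abs_self u), by simpa using hmono (neg_le_abs u)⟩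
    exact hTu ▸ norm_le_norm_of_abs_le_abs (this.trans (le_abs_self _))
  -- `T |u|` already has the largest possible norm, so strict monotonicity leaves no room above it.
  have hsup : T (|u| ⊔ e) = T |u| := by
    by_contra hne
    have := hSM _ _ (hT _ (abs_nonneg u)) (hmono le_sup_left) (Ne.symm hne)
    have := hTle (f := |u| ⊔ e) fun t ↦ by
      simpa [abs_of_nonneg (le_max_of_le_left (abs_nonneg (u t)))]
        using ⟨hu' t, (abs_le.1 (he' t)).2⟩
    linarith
  have := congrArg T (inf_add_sup e |u|)
  rw [map_add, map_add, sup_comm, hsup] at this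
  exact (add_right_cancel this).symm

lemma norm_inf_abs_le (he : 0 ≤ e) {c : ℝ} (hc : 0 ≤ c) (h : ∀ t, e t ≠ 0 → |u t| ≤ c) :
    ‖e ⊓ |u|‖ ≤ c := by
  refine (norm_le hc).2 fun t ↦ ?_
  rw [coe_inf, Pi.inf_apply, abs_apply, Real.norm_eq_abs,
    abs_of_nonneg (le_inf (he t) (abs_nonneg _))]
  by_cases ht : e t = 0
  · simpa [ht] using hc
  · exact inf_le_right.trans (h t ht)

lemma norm_apply_le_of_abs_le_on_support
    (hSM : ∀ x y : Y, 0 ≤ x → x ≤ y → x ≠ y → ‖x‖ < ‖y‖)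
    (hT : ∀ f, 0 ≤ f → 0 ≤ T f) (hT1 : ‖T‖ ≤ 1) (hu : ‖u‖ ≤ 1) (hTu : ‖T u‖ = 1)
    (he : 0 ≤ e) (he1 : ‖e‖ ≤ 1) {c : ℝ} (hc : 0 ≤ c) (h : ∀ t, e t ≠ 0 → |u t| ≤ c) :
    ‖T e‖ ≤ c := by
  rw [apply_eq_apply_inf_abs hSM hT hT1 hu hTu he1]
  exact (T.le_of_opNorm_le hT1 _).trans (by simpa using norm_inf_abs_le he hc h)

lemma norm_apply_le_of_norm_sub_le {S : C₀(L, ℝ) →L[ℝ] Y} {e₁ e₂ : C₀(L, ℝ)}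
    (hSM : ∀ x y : Y, 0 ≤ x → x ≤ y → x ≠ y → ‖x‖ < ‖y‖)
    (hT : ∀ f, 0 ≤ f → 0 ≤ T f) (hT1 : ‖T‖ ≤ 1) (hu : ‖u‖ ≤ 1) (hTu : ‖T u‖ = 1) {r : ℝ}
    (hue : ‖u - e₁‖ ≤ r) (hTS : ‖T - S‖ ≤ r) (he₂ : 0 ≤ e₂) (he₂1 : ‖e₂‖ ≤ 1)
    (he₁₂ : ∀ t, e₂ t ≠ 0 → e₁ t = 0) : ‖S e₂‖ ≤ 2 * r := by
  have hTe₂ : ‖T e₂‖ ≤ r :=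
    (norm_apply_le_of_abs_le_on_support hSM hT hT1 hu hTu he₂ he₂1 (norm_nonneg (u - e₁))
      fun t ht ↦ by simpa [he₁₂ t ht] using norm_apply_le (u - e₁) t).trans hue
  calc ‖S e₂‖ ≤ ‖T e₂‖ + ‖(T - S) e₂‖ := by simpa using norm_sub_le (T e₂) ((T - S) e₂)
    _ ≤ r + ‖T - S‖ * 1 := by gcongr; exact (T - S).le_of_opNorm_le_of_le le_rfl he₂1
    _ ≤ 2 * r := by linarith

end NormingOperator

lemma exists_positive_op_of_nonneg {L : Type*} [TopologicalSpace L] [T2Space L]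
    [LocallyCompactSpace L] [Nontrivial L] {Y : Type*} [NormedAddCommGroup Y] [Lattice Y]
    [HasSolidNorm Y] [IsOrderedAddMonoid Y] [NormedSpace ℝ Y] [IsOrderedModule ℝ Y] {x y : Y}
    (hx : 0 ≤ x) (hy : 0 ≤ y) (hxy : ‖x + y‖ = 1) :
    ∃ (S : C₀(L, ℝ) →L[ℝ] Y) (e₁ e₂ : C₀(L, ℝ)), ‖S‖ = 1 ∧ (∀ f, 0 ≤ f → 0 ≤ S f) ∧
      S e₁ = x ∧ S e₂ = y ∧ ‖e₁‖ = 1 ∧ 0 ≤ e₂ ∧ ‖e₂‖ ≤ 1 ∧ ∀ t, e₂ t ≠ 0 → e₁ t = 0 := by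
  obtain ⟨t₁, t₂, ht⟩ := exists_pair_ne L
  obtain ⟨e₁, e₂, he₂, he₁1, he₂1, he₁t₁, he₁t₂, he₂t₁, he₂t₂, he₁₂⟩ := exists_disjoint_bumps ht
  exact ⟨twoPointOp t₁ t₂ x y, e₁, e₂, (norm_twoPointOp hx hy).trans hxy,
    fun _ ↦ twoPointOp_nonneg hx hy, by simp [he₁t₁, he₁t₂], by simp [he₂t₁, he₂t₂],
    he₁1, he₂, he₂1, he₁₂⟩

theorem stmt_14_general {L : Type*} [TopologicalSpace L] [LocallyCompactSpace L] [T2Space L]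
    [Nontrivial L]
    {Y : Type*} [NormedAddCommGroup Y] [Lattice Y] [HasSolidNorm Y]
    [IsOrderedAddMonoid Y] [NormedSpace ℝ Y]
    (hSM : ∀ x y : Y, 0 ≤ x → x ≤ y → x ≠ y → ‖x‖ < ‖y‖)
    (hBPB : ∀ ε : ℝ, 0 < ε → ε < 1 → ∃ η : ℝ, 0 < η ∧ η < ε ∧
      ∀ S : C₀(L, ℝ) →L[ℝ] Y, ‖S‖ = 1 → (∀ f : C₀(L, ℝ), (∀ t, 0 ≤ f t) → 0 ≤ S f) →
      ∀ x₀ : C₀(L, ℝ), ‖x₀‖ = 1 → ‖S x₀‖ > 1 - η →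
      ∃ (u₀ : C₀(L, ℝ)) (T : C₀(L, ℝ) →L[ℝ] Y),
        ‖u₀‖ = 1 ∧ ‖T‖ = 1 ∧ (∀ f : C₀(L, ℝ), (∀ t, 0 ≤ f t) → 0 ≤ T f) ∧
        ‖T u₀‖ = 1 ∧ ‖u₀ - x₀‖ < ε ∧ ‖T - S‖ < ε) :
    ∀ ε : ℝ, 0 < ε → ε < 1 → ∃ δ : ℝ, 0 < δ ∧ δ ≤ ε ∧
      ∀ x y : Y, 0 ≤ x → 0 ≤ y → ‖x‖ = 1 → ‖x + y‖ ≤ 1 + δ → ‖y‖ ≤ ε := by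
  have := isOrderedModule_of_hasSolidNorm (Y := Y)
  intro ε hε hε1
  obtain ⟨η, hη, hηε, hBPB⟩ := hBPB (ε / 4) (by linarith) (by linarith)
  refine ⟨min (η / 2) ε, lt_min (by linarith) hε, min_le_right _ _,
    fun x y hx hy hx1 hxy ↦ ?_⟩
  have hδ : min (η / 2) ε ≤ η / 2 := min_le_left _ _
  set N := ‖x + y‖
  have hN : 1 ≤ N := hx1 ▸ norm_le_norm_of_abs_le_abs (by
    simp [abs_of_nonneg, hx, hy, add_nonneg])
  have hN0 : 0 < N := by linarith
  obtain ⟨S, e₁, e₂, hS1, hS, hSe₁, hSe₂, he₁1, he₂, he₂1, he₁₂⟩ :=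
    exists_positive_op_of_nonneg (L := L) (smul_nonneg (inv_nonneg.2 hN0.le) hx)
      (smul_nonneg (inv_nonneg.2 hN0.le) hy)
      (by rw [← smul_add, norm_smul, norm_inv, norm_norm, inv_mul_cancel₀ hN0.ne'])
  obtain ⟨u, T, hu, hT1, hT, hTu, hue, hTS⟩ := hBPB S hS1 hS e₁ he₁1 (by
    rw [hSe₁, norm_smul, hx1, mul_one, norm_inv, norm_norm, gt_iff_lt, ← one_div,
      lt_div_iff₀ hN0]
    nlinarith)
  have hSe₂_le : N⁻¹ * ‖y‖ ≤ 2 * (ε / 4) := by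
    simpa [hSe₂, norm_smul, abs_of_pos hN0] using
      norm_apply_le_of_norm_sub_le hSM hT hT1.le hu.le hTu hue.le hTS.le he₂ he₂1 he₁₂
  have hy : ‖y‖ ≤ N * (2 * (ε / 4)) := by rwa [← inv_mul_le_iff₀ hN0]
  nlinarith

/-- If `L` is a locally compact Hausdorff space with at least two points, `Y` a strictly
monotone Banach lattice, and the pair `(C₀(L), Y)` has the Bishop–Phelps–Bollobás property
for positive operators, then `Y` is uniformly monotone. -/
theorem stmt_14 {L : Type*} [TopologicalSpace L] [LocallyCompactSpace L] [T2Space L]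
    [Nontrivial L]
    {Y : Type*} [NormedAddCommGroup Y] [Lattice Y] [HasSolidNorm Y]
    [IsOrderedAddMonoid Y] [NormedSpace ℝ Y] [CompleteSpace Y]
    (hSM : ∀ x y : Y, 0 ≤ x → x ≤ y → x ≠ y → ‖x‖ < ‖y‖)
    (hBPB : ∀ ε : ℝ, 0 < ε → ε < 1 → ∃ η : ℝ, 0 < η ∧ η < ε ∧
      ∀ S : C₀(L, ℝ) →L[ℝ] Y, ‖S‖ = 1 → (∀ f : C₀(L, ℝ), (∀ t, 0 ≤ f t) → 0 ≤ S f) →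
      ∀ x₀ : C₀(L, ℝ), ‖x₀‖ = 1 → ‖S x₀‖ > 1 - η →
      ∃ (u₀ : C₀(L, ℝ)) (T : C₀(L, ℝ) →L[ℝ] Y),
        ‖u₀‖ = 1 ∧ ‖T‖ = 1 ∧ (∀ f : C₀(L, ℝ), (∀ t, 0 ≤ f t) → 0 ≤ T f) ∧
        ‖T u₀‖ = 1 ∧ ‖u₀ - x₀‖ < ε ∧ ‖T - S‖ < ε) :
    ∀ ε : ℝ, 0 < ε → ε < 1 → ∃ δ : ℝ, 0 < δ ∧ δ ≤ ε ∧
      ∀ x y : Y, 0 ≤ x → 0 ≤ y → ‖x‖ = 1 → ‖x + y‖ ≤ 1 + δ → ‖y‖ ≤ ε :=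
  stmt_14_general hSM hBPB
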